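/- arXiv:1412.2231 — 4 statements merged into one kernel-verified Lean document; each statement's English description precedes it below -/
import Mathlib

section
/- Let g : ℝ → ℝ be bounded below. For x₁ > x₂ and any p₁ minimizing p ↦ g(p) + (1/2)(p - x₁)², and any p₂ minimizing p ↦ g(p) + (1/2)(p - x₂)², one has p₁ ≥ p₂. -/
/-- Testing each minimality against the other minimizer and adding, the values of `g` cancel and
the quadratic terms leave exactly `(x₁ - x₂) * (p₁ - p₂)`. -/
lemma prox_sub_mul_sub_nonneg (g : ℝ → ℝ) (x₁ x₂ p₁ p₂ : ℝ)
    (hp₁ : g p₁ + (1/2) * (p₁ - x₁)^2 ≤ g p₂ + (1/2) * (p₂ - x₁)^2)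
    (hp₂ : g p₂ + (1/2) * (p₂ - x₂)^2 ≤ g p₁ + (1/2) * (p₁ - x₂)^2) :
    0 ≤ (x₁ - x₂) * (p₁ - p₂) := by
  linarith

theorem prox_monotone_general (g : ℝ → ℝ)
    (x₁ x₂ p₁ p₂ : ℝ) (hx : x₁ > x₂)
    (hp₁ : ∀ p : ℝ, g p₁ + (1/2) * (p₁ - x₁)^2 ≤ g p + (1/2) * (p - x₁)^2)
    (hp₂ : ∀ p : ℝ, g p₂ + (1/2) * (p₂ - x₂)^2 ≤ g p + (1/2) * (p - x₂)^2) :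
    p₁ ≥ p₂ := by
  have hmono := prox_sub_mul_sub_nonneg g x₁ x₂ p₁ p₂ (hp₁ p₂) (hp₂ p₁)
  exact sub_nonneg.mp (nonneg_of_mul_nonneg_right hmono (sub_pos.mpr hx))

/-- Monotonicity of the proximal operator of any lower bounded function. -/
theorem prox_monotone (g : ℝ → ℝ) (hg : BddBelow (Set.range g))
    (x₁ x₂ p₁ p₂ : ℝ) (hx : x₁ > x₂)
    (hp₁ : ∀ p : ℝ, g p₁ + (1/2) * (p₁ - x₁)^2 ≤ g p + (1/2) * (p - x₁)^2)
    (hp₂ : ∀ p : ℝ, g p₂ + (1/2) * (p₂ - x₂)^2 ≤ g p + (1/2) * (p - x₂)^2) :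
    p₁ ≥ p₂ :=
  prox_monotone_general g x₁ x₂ p₁ p₂ hx hp₁ hp₂
end

section
/- For any real m × n matrices A and B (with m ≤ n), ‖A - B‖_F² ≥ ∑_{i=1}^m (σᵢ(A) - σᵢ(B))², where σᵢ denotes the i-th largest singular value. -/
/-- The singular values of a real matrix (unsorted): square roots of the
eigenvalues of `A * Aᵀ`. -/
noncomputable def svUnsorted {m n : ℕ} (A : Matrix (Fin m) (Fin n) ℝ) : Fin m → ℝ :=
  fun i => Real.sqrt ((Matrix.isHermitian_mul_conjTranspose_self A).eigenvalues i)

/-- `singularValues A i` is the `i`-th largest singular value of `A`. -/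
noncomputable def singularValues {m n : ℕ} (A : Matrix (Fin m) (Fin n) ℝ) : Fin m → ℝ :=
  fun i => svUnsorted A (Tuple.sort (fun j => - svUnsorted A j) i)

/-!
Expanding the squares, and using `‖A‖_F² = tr (A Aᵀ) = ∑ σᵢ(A)²`, the claim reduces to von
Neumann's trace inequality `⟨A, B⟩_F ≤ ∑ σᵢ(A) σᵢ(B)`.

For that, let `(uᵢ)` and `(u'ⱼ)` be orthonormal eigenbases of `A Aᵀ` and `B Bᵀ`. Then
`A = ∑ uᵢ wᵢᵀ` with `wᵢ = Aᵀ uᵢ` pairwise orthogonal of norm `σᵢ(A)`, similarly for `B`, and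
`⟨A, B⟩_F = ∑ᵢⱼ ⟨uᵢ, u'ⱼ⟩ ⟨wᵢ, w'ⱼ⟩ ≤ ∑ᵢⱼ Dᵢⱼ ‖wᵢ‖ ‖w'ⱼ‖` by AM-GM, where
`Dᵢⱼ = (⟨uᵢ, u'ⱼ⟩² + ⟨ŵᵢ, ŵ'ⱼ⟩²) / 2` for the normalised `ŵᵢ`. By Bessel's inequality `D` is
doubly substochastic. Such a matrix is a corner of a doubly stochastic one, so Birkhoff's theorem
and the rearrangement inequality give `∑ᵢⱼ Dᵢⱼ aᵢ bⱼ ≤ ∑ᵢ aᵢ bᵢ` for nonnegative, similarly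
ordered `a` and `b`.
-/

open Finset Matrix
open scoped InnerProductSpace

section Substochastic

variable {R : Type*} [Field R] [LinearOrder R] [IsStrictOrderedRing R] {ι : Type*} [Fintype ι]

structure IsDoublySubstochastic (D : Matrix ι ι R) : Prop where
  nonneg : ∀ i j, 0 ≤ D i j
  sum_row_le_one : ∀ i, ∑ j, D i j ≤ 1
  sum_col_le_one : ∀ j, ∑ i, D i j ≤ 1

theorem IsDoublySubstochastic.average {P Q : Matrix ι ι R} (hP : IsDoublySubstochastic P)
    (hQ : IsDoublySubstochastic Q) : IsDoublySubstochastic fun i j => (P i j + Q i j) / 2 where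
  nonneg i j := by linarith [hP.nonneg i j, hQ.nonneg i j]
  sum_row_le_one i := by
    rw [← sum_div, sum_add_distrib]; linarith [hP.sum_row_le_one i, hQ.sum_row_le_one i]
  sum_col_le_one j := by
    rw [← sum_div, sum_add_distrib]; linarith [hP.sum_col_le_one j, hQ.sum_col_le_one j]

theorem IsDoublySubstochastic.fromBlocks_mem_doublyStochastic [DecidableEq ι]
    {D : Matrix ι ι R} (hD : IsDoublySubstochastic D) :
    fromBlocks D (diagonal fun i => 1 - ∑ j, D i j) (diagonal fun j => 1 - ∑ i, D i j) Dᵀ ∈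
      doublyStochastic R (ι ⊕ ι) := by
  refine mem_doublyStochastic_iff_sum.2 ⟨?_, ?_, ?_⟩
  · rintro (i | i) (j | j) <;> simp only [fromBlocks_apply₁₁, fromBlocks_apply₁₂,
      fromBlocks_apply₂₁, fromBlocks_apply₂₂, transpose_apply, diagonal_apply]
    all_goals first
      | exact hD.nonneg _ _
      | split_ifs <;> simp [hD.sum_row_le_one, hD.sum_col_le_one]
  · rintro (i | i) <;> simp [Fintype.sum_sum_type, diagonal_apply]
  · rintro (j | j) <;> simp [Fintype.sum_sum_type, diagonal_apply]

theorem sum_mul_mul_le_of_mem_doublyStochastic [DecidableEq ι] {M : Matrix ι ι R}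
    (hM : M ∈ doublyStochastic R ι) {f g : ι → R} (hfg : Monovary f g) :
    ∑ i, ∑ j, M i j * f i * g j ≤ ∑ i, f i * g i := by
  rw [← SetLike.mem_coe, doublyStochastic_eq_convexHull_permMatrix] at hM
  have hlin : IsLinearMap R fun N : Matrix ι ι R => ∑ i, ∑ j, N i j * f i * g j := by
    constructor <;> intros <;> simp [sum_add_distrib, mul_sum, add_mul, mul_assoc]
  refine convexHull_min ?_ (convex_halfSpace_le hlin _) hM
  rintro _ ⟨σ, rfl⟩
  simpa [Equiv.Perm.permMatrix, PEquiv.toMatrix_apply] using hfg.sum_mul_comp_perm_le_sum_mul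

theorem Monovary.sumElim_zero {κ α β : Type*} [Preorder α] [Zero α] [Preorder β] [Zero β]
    {f : κ → α} {g : κ → β} (hf : 0 ≤ f) (hg : 0 ≤ g) (hfg : Monovary f g) :
    Monovary (Sum.elim f 0 : κ ⊕ κ → α) (Sum.elim g 0) := by
  rintro (i | i) (j | j) h <;> simp only [Sum.elim_inl, Sum.elim_inr, Pi.zero_apply] at h ⊢
  · exact hfg h
  · exact ((h.trans_le (hg i)).false).elim
  · exact hf j
  · exact le_rfl

theorem IsDoublySubstochastic.sum_mul_mul_le {D : Matrix ι ι R} (hD : IsDoublySubstochastic D)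
    {f g : ι → R} (hf : 0 ≤ f) (hg : 0 ≤ g) (hfg : Monovary f g) :
    ∑ i, ∑ j, D i j * f i * g j ≤ ∑ i, f i * g i := by
  classical
  simpa [Fintype.sum_sum_type] using sum_mul_mul_le_of_mem_doublyStochastic
    hD.fromBlocks_mem_doublyStochastic (hfg.sumElim_zero hf hg)

end Substochastic

section InnerProductSpace

variable {ι E F : Type*} [NormedAddCommGroup E] [InnerProductSpace ℝ E]
  [NormedAddCommGroup F] [InnerProductSpace ℝ F]

theorem sum_inner_sq_le_norm_sq [Fintype ι] {v : ι → E} (hv : Orthonormal ℝ fun i : {i | v i ≠ 0} => v i)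
    (x : E) : ∑ i, ⟪v i, x⟫_ℝ ^ 2 ≤ ‖x‖ ^ 2 := by
  classical
  calc ∑ i, ⟪v i, x⟫_ℝ ^ 2 = ∑ i : {i | v i ≠ 0}, ⟪v i, x⟫_ℝ ^ 2 :=
        sum_congr_set _ _ _ (fun _ _ => rfl) fun i hi => by simp_all
    _ ≤ ‖x‖ ^ 2 := by simpa using hv.sum_inner_products_le x (s := univ)

theorem norm_le_one_of_orthonormal_ne_zero {v : ι → E}
    (hv : Orthonormal ℝ fun i : {i | v i ≠ 0} => v i) (i : ι) : ‖v i‖ ≤ 1 := by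
  by_cases h : v i = 0
  · simp [h]
  · exact (hv.1 ⟨i, h⟩).le

theorem isDoublySubstochastic_inner_sq [Fintype ι] {v w : ι → E}
    (hv : Orthonormal ℝ fun i : {i | v i ≠ 0} => v i)
    (hw : Orthonormal ℝ fun i : {i | w i ≠ 0} => w i) :
    IsDoublySubstochastic fun i j => ⟪v i, w j⟫_ℝ ^ 2 where
  nonneg _ _ := sq_nonneg _
  sum_row_le_one i := by
    simp_rw [real_inner_comm _ (v i)]
    calc _ ≤ ‖v i‖ ^ 2 := sum_inner_sq_le_norm_sq hw _
      _ ≤ 1 := pow_le_one₀ (norm_nonneg _) (norm_le_one_of_orthonormal_ne_zero hv i)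
  sum_col_le_one j :=
    calc _ ≤ ‖w j‖ ^ 2 := sum_inner_sq_le_norm_sq hv _
      _ ≤ 1 := pow_le_one₀ (norm_nonneg _) (norm_le_one_of_orthonormal_ne_zero hw j)

theorem orthonormal_normalize {w : ι → E} (hw : Pairwise fun i j => ⟪w i, w j⟫_ℝ = 0) :
    Orthonormal ℝ fun i : {i | ‖w i‖⁻¹ • w i ≠ 0} => ‖w i‖⁻¹ • w i := by
  refine ⟨fun i => norm_smul_inv_norm fun h => i.2 (by simp [h]), fun i j hij => ?_⟩
  simp [real_inner_smul_left, real_inner_smul_right, hw (Subtype.coe_ne_coe.2 hij)]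

theorem inner_eq_norm_mul_norm_mul_inner_normalize (x y : E) :
    ⟪x, y⟫_ℝ = ‖x‖ * ‖y‖ * ⟪‖x‖⁻¹ • x, ‖y‖⁻¹ • y⟫_ℝ := by
  rcases eq_or_ne x 0 with rfl | hx
  · simp
  rcases eq_or_ne y 0 with rfl | hy
  · simp
  rw [real_inner_smul_left, real_inner_smul_right]
  field_simp

theorem sum_inner_mul_inner_le_sum_norm_mul_norm [Fintype ι] {u u' : ι → E} (hu : Orthonormal ℝ u)
    (hu' : Orthonormal ℝ u') {w w' : ι → F} (hw : Pairwise fun i j => ⟪w i, w j⟫_ℝ = 0)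
    (hw' : Pairwise fun i j => ⟪w' i, w' j⟫_ℝ = 0) (hww' : Monovary (‖w ·‖) (‖w' ·‖)) :
    ∑ i, ∑ j, ⟪u i, u' j⟫_ℝ * ⟪w i, w' j⟫_ℝ ≤ ∑ i, ‖w i‖ * ‖w' i‖ := by
  set v := fun i => ‖w i‖⁻¹ • w i
  set v' := fun j => ‖w' j‖⁻¹ • w' j
  have hD := (isDoublySubstochastic_inner_sq (hu.comp _ Subtype.val_injective)
    (hu'.comp _ Subtype.val_injective)).average
      (isDoublySubstochastic_inner_sq (orthonormal_normalize hw) (orthonormal_normalize hw'))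
  calc ∑ i, ∑ j, ⟪u i, u' j⟫_ℝ * ⟪w i, w' j⟫_ℝ
      ≤ ∑ i, ∑ j, (⟪u i, u' j⟫_ℝ ^ 2 + ⟪v i, v' j⟫_ℝ ^ 2) / 2 * ‖w i‖ * ‖w' j‖ := by
        refine sum_le_sum fun i _ => sum_le_sum fun j _ => ?_
        rw [inner_eq_norm_mul_norm_mul_inner_normalize (w i)]
        have := mul_nonneg (mul_nonneg (norm_nonneg (w i)) (norm_nonneg (w' j)))
          (sq_nonneg (⟪u i, u' j⟫_ℝ - ⟪v i, v' j⟫_ℝ))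
        linarith
    _ ≤ ∑ i, ‖w i‖ * ‖w' i‖ :=
        hD.sum_mul_mul_le (fun i => norm_nonneg _) (fun i => norm_nonneg _) hww'

end InnerProductSpace

theorem Matrix.sum_mul_apply_mul_mul_apply {α l k n : Type*} [CommSemiring α] [Fintype l]
    [Fintype k] [Fintype n] (X X' : Matrix l k α) (Y Y' : Matrix k n α) :
    ∑ s, ∑ t, (X * Y) s t * (X' * Y') s t = ∑ i, ∑ j, (Xᵀ * X') i j * (Y * Y'ᵀ) i j := by
  simp only [← hadamard_apply, sum_hadamard_eq]
  rw [Matrix.mul_assoc, trace_mul_comm, ← trace_transpose (Xᵀ * X' * _)]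
  simp only [transpose_mul, transpose_transpose, Matrix.mul_assoc]

section SingularValues

variable {m n : Type*} [Fintype m] [DecidableEq m] [Fintype n]

/-- `Uᵀ A` for the eigenvector unitary `U` of `A Aᵀ`: in an SVD `A = U Σ Vᵀ` this is `Σ Vᵀ`. -/
noncomputable def scaledRightSingularVectors (A : Matrix m n ℝ) : Matrix m n ℝ :=
  star ((isHermitian_mul_conjTranspose_self A).eigenvectorUnitary : Matrix m m ℝ) * A

theorem eigenvectorUnitary_mul_scaledRightSingularVectors (A : Matrix m n ℝ) :
    ((isHermitian_mul_conjTranspose_self A).eigenvectorUnitary : Matrix m m ℝ) *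
      scaledRightSingularVectors A = A := by
  rw [scaledRightSingularVectors, ← Matrix.mul_assoc, ← Unitary.coe_star,
    Unitary.coe_mul_star_self, Matrix.one_mul]

theorem scaledRightSingularVectors_mul_conjTranspose (A : Matrix m n ℝ) :
    scaledRightSingularVectors A * (scaledRightSingularVectors A)ᴴ =
      diagonal (isHermitian_mul_conjTranspose_self A).eigenvalues := by
  have h := (isHermitian_mul_conjTranspose_self A).conjStarAlgAut_star_eigenvectorUnitary
  rw [Unitary.conjStarAlgAut_star_apply] at h
  rw [scaledRightSingularVectors, conjTranspose_mul, star_eq_conjTranspose,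
    conjTranspose_conjTranspose, ← star_eq_conjTranspose]
  simpa [Matrix.mul_assoc] using h

theorem inner_scaledRightSingularVectors (A : Matrix m n ℝ) (i j : m) :
    ⟪WithLp.toLp 2 (scaledRightSingularVectors A i),
      WithLp.toLp 2 (scaledRightSingularVectors A j)⟫_ℝ =
      diagonal (isHermitian_mul_conjTranspose_self A).eigenvalues i j := by
  rw [inner_matrix_row_row, scaledRightSingularVectors_mul_conjTranspose]
  rcases eq_or_ne i j with rfl | h
  · simp
  · simp [h, h.symm]

theorem pairwise_inner_scaledRightSingularVectors_eq_zero (A : Matrix m n ℝ) :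
    Pairwise fun i j => ⟪WithLp.toLp 2 (scaledRightSingularVectors A i),
      WithLp.toLp 2 (scaledRightSingularVectors A j)⟫_ℝ = 0 := fun i j hij =>
  (inner_scaledRightSingularVectors A i j).trans (diagonal_apply_ne _ hij)

theorem sum_mul_eq_sum_inner_mul_inner (A B : Matrix m n ℝ) :
    ∑ s, ∑ t, A s t * B s t =
      ∑ i, ∑ j, ⟪(isHermitian_mul_conjTranspose_self A).eigenvectorBasis i,
          (isHermitian_mul_conjTranspose_self B).eigenvectorBasis j⟫_ℝ *
        ⟪WithLp.toLp 2 (scaledRightSingularVectors A i),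
          WithLp.toLp 2 (scaledRightSingularVectors B j)⟫_ℝ := by
  conv_lhs => rw [← eigenvectorUnitary_mul_scaledRightSingularVectors A,
    ← eigenvectorUnitary_mul_scaledRightSingularVectors B]
  rw [sum_mul_apply_mul_mul_apply]
  refine sum_congr rfl fun i _ => sum_congr rfl fun j _ => ?_
  rw [inner_matrix_row_row]
  simp [mul_apply, PiLp.inner_apply, mul_comm]

end SingularValues

section SortedSingularValues

variable {m n : ℕ}

theorem norm_scaledRightSingularVectors (A : Matrix (Fin m) (Fin n) ℝ) (i : Fin m) :
    ‖WithLp.toLp 2 (scaledRightSingularVectors A i)‖ = svUnsorted A i := by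
  rw [norm_eq_sqrt_real_inner, inner_scaledRightSingularVectors, diagonal_apply_eq, svUnsorted]

theorem singularValues_antitone (A : Matrix (Fin m) (Fin n) ℝ) : Antitone (singularValues A) :=
  fun _ _ hij => neg_le_neg_iff.1 (Tuple.monotone_sort (fun j => -svUnsorted A j) hij)

theorem sum_sq_eq_sum_singularValues_sq (A : Matrix (Fin m) (Fin n) ℝ) :
    ∑ i, ∑ j, A i j ^ 2 = ∑ i, singularValues A i ^ 2 := by
  calc ∑ i, ∑ j, A i j ^ 2 = (A * Aᴴ).trace := by
        simp [← sum_hadamard_eq, hadamard_apply, sq]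
    _ = ∑ i, svUnsorted A i ^ 2 := by
        rw [(isHermitian_mul_conjTranspose_self A).trace_eq_sum_eigenvalues]
        exact sum_congr rfl fun i _ =>
          (Real.sq_sqrt (eigenvalues_self_mul_conjTranspose_nonneg A i)).symm
    _ = ∑ i, singularValues A i ^ 2 :=
        (Equiv.sum_comp (Tuple.sort fun j => -svUnsorted A j) (svUnsorted A · ^ 2)).symm

theorem sum_mul_le_sum_singularValues_mul (A B : Matrix (Fin m) (Fin n) ℝ) :
    ∑ s, ∑ t, A s t * B s t ≤ ∑ i, singularValues A i * singularValues B i := by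
  set π := Tuple.sort fun j => -svUnsorted A j
  set ρ := Tuple.sort fun j => -svUnsorted B j
  set u := (isHermitian_mul_conjTranspose_self A).eigenvectorBasis
  set u' := (isHermitian_mul_conjTranspose_self B).eigenvectorBasis
  set w := fun i => WithLp.toLp 2 (scaledRightSingularVectors A i)
  set w' := fun j => WithLp.toLp 2 (scaledRightSingularVectors B j)
  calc ∑ s, ∑ t, A s t * B s t = ∑ i, ∑ j, ⟪u i, u' j⟫_ℝ * ⟪w i, w' j⟫_ℝ :=
        sum_mul_eq_sum_inner_mul_inner A B
    _ = ∑ i, ∑ j, ⟪u (π i), u' (ρ j)⟫_ℝ * ⟪w (π i), w' (ρ j)⟫_ℝ := by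
        rw [← Equiv.sum_comp π]
        exact sum_congr rfl fun i _ => (Equiv.sum_comp ρ _).symm
    _ ≤ ∑ i, ‖w (π i)‖ * ‖w' (ρ i)‖ := by
        refine sum_inner_mul_inner_le_sum_norm_mul_norm (u.orthonormal.comp _ π.injective)
          (u'.orthonormal.comp _ ρ.injective)
          ((pairwise_inner_scaledRightSingularVectors_eq_zero A).comp_of_injective π.injective)
          ((pairwise_inner_scaledRightSingularVectors_eq_zero B).comp_of_injective ρ.injective) ?_
        simp only [w, w', norm_scaledRightSingularVectors]
        exact (singularValues_antitone A).monovary (singularValues_antitone B)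
    _ = ∑ i, singularValues A i * singularValues B i := by
        simp only [w, w', norm_scaledRightSingularVectors]; rfl

end SortedSingularValues

theorem frobenius_sq_ge_sum_sq_singular_value_diff_general {m n : ℕ}
    (A B : Matrix (Fin m) (Fin n) ℝ) :
    ∑ i : Fin m, ∑ j : Fin n, (A i j - B i j)^2 ≥
      ∑ i : Fin m, (singularValues A i - singularValues B i)^2 := by
  have hA := sum_sq_eq_sum_singularValues_sq A
  have hB := sum_sq_eq_sum_singularValues_sq B
  have hAB := sum_mul_le_sum_singularValues_mul A B
  simp only [sub_sq, sum_add_distrib, sum_sub_distrib, mul_assoc, ← mul_sum]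
  linarith

/-- The squared Frobenius distance dominates the squared Euclidean distance
between the (sorted) singular value vectors. -/
theorem frobenius_sq_ge_sum_sq_singular_value_diff {m n : ℕ} (hmn : m ≤ n)
    (A B : Matrix (Fin m) (Fin n) ℝ) :
    ∑ i : Fin m, ∑ j : Fin n, (A i j - B i j)^2 ≥
      ∑ i : Fin m, (singularValues A i - singularValues B i)^2 :=
  frobenius_sq_ge_sum_sq_singular_value_diff_general A B
end

section
/- Let g : [0,∞) → [0,∞) with g(0) = 0 be concave, nondecreasing and differentiable with convex derivative. For b ≥ 0, suppose x̂ = max{ x ∈ [0, b] : g'(x) + x - b = 0 } exists. Then x* = argmin over {0, x̂} of f_b, where f_b(x) = g(x) + (1/2)(x - b)², is a global minimizer of f_b on [0, ∞). -/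
/-!
The derivative `φ x = g' x + x - b` of `f_b` is convex with `φ x̂ = 0`. Monotonicity of `g` gives
`φ ≥ 0` beyond `b`, and since `φ` has no zero in `(x̂, b]`, the intermediate value theorem gives
`φ ≥ 0` on all of `[x̂, ∞)`, so `f_b` increases there. For `t < x̂`, convexity of `φ` together with
`φ x̂ = 0` forces either `φ ≥ 0` on `[0, t]` or `φ ≤ 0` on `[t, x̂]`; hence `f_b t ≥ f_b 0` or
`f_b t ≥ f_b x̂`.
-/

open Set

theorem HasDerivWithinAt.nonneg_of_monotoneOn_Ici {g : ℝ → ℝ} {g' p x : ℝ} (hx : p ≤ x)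
    (hd : HasDerivWithinAt g g' (Ici p) x) (hg : MonotoneOn g (Ici p)) : 0 ≤ g' := by
  refine hd.nonneg_of_monotoneOn (accPt_principal_iff_nhdsWithin.2 ?_) hg
  exact (nhdsGT_neBot x).mono
    (nhdsWithin_mono x fun y hy => ⟨hx.trans hy.le, hy.ne'⟩)

theorem le_of_hasDerivWithinAt_Ici_of_deriv_nonneg {F F' : ℝ → ℝ} {p a c : ℝ}
    (hF : ∀ x ∈ Ici p, HasDerivWithinAt F (F' x) (Ici p) x) (hpa : p ≤ a) (hac : a ≤ c)
    (hF' : ∀ x ∈ Ioo a c, 0 ≤ F' x) : F a ≤ F c := by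
  have hsub : Icc a c ⊆ Ici p := fun x hx => hpa.trans hx.1
  refine monotoneOn_of_hasDerivWithinAt_nonneg (convex_Icc a c)
    (fun x hx => (hF x (hsub hx)).continuousWithinAt.mono hsub) (fun x hx => ?_)
    (by simpa using hF') (left_mem_Icc.2 hac) (right_mem_Icc.2 hac) hac
  rw [interior_Icc] at hx ⊢
  exact ((hF x (hpa.trans hx.1.le)).hasDerivAt
    (Ici_mem_nhds (hpa.trans_lt hx.1))).hasDerivWithinAt

theorem le_of_hasDerivWithinAt_Ici_of_deriv_nonpos {F F' : ℝ → ℝ} {p a c : ℝ}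
    (hF : ∀ x ∈ Ici p, HasDerivWithinAt F (F' x) (Ici p) x) (hpa : p ≤ a) (hac : a ≤ c)
    (hF' : ∀ x ∈ Ioo a c, F' x ≤ 0) : F c ≤ F a :=
  neg_le_neg_iff.1 <| le_of_hasDerivWithinAt_Ici_of_deriv_nonneg (F := -F) (F' := -F')
    (fun x hx => (hF x hx).neg) hpa hac fun x hx => neg_nonneg.2 (hF' x hx)

theorem HasDerivWithinAt.add_half_sq_sub {g : ℝ → ℝ} {g' x : ℝ} {s : Set ℝ}
    (hg : HasDerivWithinAt g g' s x) (b : ℝ) :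
    HasDerivWithinAt (fun t => g t + (1/2) * (t - b)^2) (g' + x - b) s x := by
  have hsq := (((hasDerivWithinAt_id x s).sub_const b).fun_pow 2).const_mul (1/2 : ℝ)
  refine (hg.add hsq).congr_deriv ?_
  simp only [id]
  ring

theorem nonneg_of_le_of_forall_ne_zero_Ioc {φ : ℝ → ℝ} {a b : ℝ} (hφ : ContinuousOn φ (Ioc a b))
    (ha : 0 ≤ φ a) (hge : ∀ x, b ≤ x → 0 ≤ φ x) (hne : ∀ z ∈ Ioc a b, φ z ≠ 0) :
    ∀ x, a ≤ x → 0 ≤ φ x := by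
  intro x hx
  rcases hx.eq_or_lt with rfl | hax
  · exact ha
  rcases le_or_gt b x with hbx | hxb
  · exact hge x hbx
  by_contra! hneg
  obtain ⟨z, hz, hz0⟩ := intermediate_value_Icc hxb.le
    (hφ.mono fun y hy => ⟨hax.trans_le hy.1, hy.2⟩) ⟨hneg.le, hge b le_rfl⟩
  exact hne z ⟨hax.trans_le hz.1, hz.2⟩ hz0

theorem ConvexOn.nonneg_Icc_or_nonpos_Icc {φ : ℝ → ℝ} {a c : ℝ} (t : ℝ)
    (hφ : ConvexOn ℝ (Icc a c) φ) (hc : φ c ≤ 0) :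
    (∀ r ∈ Icc a t, 0 ≤ φ r) ∨ ∀ r ∈ Icc t c, φ r ≤ 0 := by
  refine or_iff_not_imp_left.2 fun h r hr => ?_
  push Not at h
  obtain ⟨s, hs, hφs⟩ := h
  have hsc : s ≤ c := hs.2.trans (hr.1.trans hr.2)
  have hr_seg : r ∈ segment ℝ s c := by
    rw [segment_eq_Icc hsc]
    exact ⟨hs.2.trans hr.1, hr.2⟩
  exact (hφ.le_on_segment ⟨hs.1, hsc⟩ (right_mem_Icc.2 (hs.1.trans hsc)) hr_seg).trans
    (max_le hφs.le hc)

theorem prox_global_min_from_zero_or_largest_stationary_general (g g' : ℝ → ℝ)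
    (hmono : MonotoneOn g (Ici 0))
    (hderiv : ∀ x ∈ Ici (0:ℝ), HasDerivWithinAt g (g' x) (Ici 0) x)
    (hg'conv : ConvexOn ℝ (Ici 0) g')
    (b : ℝ) (hb : 0 ≤ b) (xhat : ℝ)
    (hxhat_mem : xhat ∈ Icc 0 b) (hxhat_stat : g' xhat + xhat - b = 0)
    (hxhat_max : ∀ x ∈ Icc (0:ℝ) b, g' x + x - b = 0 → x ≤ xhat)
    (xstar : ℝ)
    (hxstar_min : ∀ y ∈ ({0, xhat} : Set ℝ),
      g xstar + (1/2) * (xstar - b)^2 ≤ g y + (1/2) * (y - b)^2) :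
    IsMinOn (fun t => g t + (1/2) * (t - b)^2) (Ici 0) xstar := by
  set φ : ℝ → ℝ := fun x => g' x + x - b
  have hf : ∀ x ∈ Ici (0:ℝ),
      HasDerivWithinAt (fun t => g t + (1/2) * (t - b)^2) (φ x) (Ici 0) x :=
    fun x hx => (hderiv x hx).add_half_sq_sub b
  have hφconv : ConvexOn ℝ (Ici 0) φ :=
    ((hg'conv.add (convexOn_id (convex_Ici 0))).add_const (-b)).congr fun _ _ => rfl
  have hφ_nonneg : ∀ x, xhat ≤ x → 0 ≤ φ x := by
    refine nonneg_of_le_of_forall_ne_zero_Ioc ?_ hxhat_stat.ge (fun x hx => ?_)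
      fun z hz h0 => (hxhat_max z ⟨hxhat_mem.1.trans hz.1.le, hz.2⟩ h0).not_gt hz.1
    · exact hφconv.continuousOn_interior.mono fun y hy => by
        simpa using hxhat_mem.1.trans_lt hy.1
    · have := (hderiv x (hb.trans hx)).nonneg_of_monotoneOn_Ici (hb.trans hx) hmono
      simp only [φ]
      linarith
  intro t (ht : 0 ≤ t)
  have hle_zero := hxstar_min 0 (by simp)
  have hle_xhat := hxstar_min xhat (by simp)
  rcases le_or_gt xhat t with hxt | htx
  · exact hle_xhat.trans (le_of_hasDerivWithinAt_Ici_of_deriv_nonneg hf hxhat_mem.1 hxt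
      fun x hx => hφ_nonneg x hx.1.le)
  rcases (hφconv.subset Icc_subset_Ici_self (convex_Icc 0 xhat)).nonneg_Icc_or_nonpos_Icc t
    hxhat_stat.le with h | h
  · exact hle_zero.trans (le_of_hasDerivWithinAt_Ici_of_deriv_nonneg hf le_rfl ht
      fun x hx => h x (Ioo_subset_Icc_self hx))
  · exact hle_xhat.trans (le_of_hasDerivWithinAt_Ici_of_deriv_nonpos hf ht htx.le
      fun x hx => h x (Ioo_subset_Icc_self hx))

/-- Comparing `f_b` at `0` and at the largest stationary point `x̂` in `[0,b]`
yields a global minimizer of `f_b` on `[0,∞)`. -/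
theorem prox_global_min_from_zero_or_largest_stationary (g g' : ℝ → ℝ)
    (hg_nonneg : ∀ x ∈ Ici (0:ℝ), 0 ≤ g x) (hg0 : g 0 = 0)
    (hconc : ConcaveOn ℝ (Ici 0) g) (hmono : MonotoneOn g (Ici 0))
    (hderiv : ∀ x ∈ Ici (0:ℝ), HasDerivWithinAt g (g' x) (Ici 0) x)
    (hg'conv : ConvexOn ℝ (Ici 0) g')
    (b : ℝ) (hb : 0 ≤ b) (xhat : ℝ)
    (hxhat_mem : xhat ∈ Icc 0 b) (hxhat_stat : g' xhat + xhat - b = 0)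
    (hxhat_max : ∀ x ∈ Icc (0:ℝ) b, g' x + x - b = 0 → x ≤ xhat)
    (xstar : ℝ) (hxstar_mem : xstar ∈ ({0, xhat} : Set ℝ))
    (hxstar_min : ∀ y ∈ ({0, xhat} : Set ℝ),
      g xstar + (1/2) * (xstar - b)^2 ≤ g y + (1/2) * (y - b)^2) :
    IsMinOn (fun t => g t + (1/2) * (t - b)^2) (Ici 0) xstar :=
  prox_global_min_from_zero_or_largest_stationary_general g g' hmono hderiv hg'conv b hb xhat
    hxhat_mem hxhat_stat hxhat_max xstar hxstar_min
end

section
/- Let g : [0,∞) → [0,∞) satisfy g(0) = 0, g concave, nondecreasing, differentiable with g'(0) < ∞, and suppose g'(0) - x ≤ g'(x) for all x ∈ (0, g'(0)). Then for every b ≤ g'(0), 0 is a global minimizer of f_b(x) = g(x) + (1/2)(x - b)² on [0, ∞) (hard thresholding below the threshold g'(0)). -/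
open Set Filter Topology

/- Hard thresholding. The line condition gives `g' x + x ≥ g' 0 ≥ b` left of `g' 0`, and
monotonicity of `g` (so `g' ≥ 0`) gives `g' x + x ≥ x ≥ b` right of it; hence
`f_b' = g' + x - b ≥ 0` on `(0, ∞)`, so `f_b` is nondecreasing on `[0, ∞)` and minimal at `0`. -/

theorem accPt_principal_Ici {a x : ℝ} (hx : x ∈ Ici a) : AccPt x (𝓟 (Ici a)) :=
  accPt_principal_iff_nhdsWithin.mpr <| (inferInstance : (𝓝[>] x).NeBot).mono <|
    nhdsWithin_mono x fun _ hy => ⟨hx.out.trans (le_of_lt hy), ne_of_gt hy⟩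

theorem monotoneOn_add_half_sq_sub_Ici {a b : ℝ} {g g' : ℝ → ℝ}
    (hd : ∀ x ∈ Ici a, HasDerivWithinAt g (g' x) (Ici a) x)
    (hslope : ∀ x ∈ Ioi a, b ≤ g' x + x) :
    MonotoneOn (fun x => g x + (1/2) * (x - b)^2) (Ici a) := by
  have hsq (x : ℝ) : HasDerivAt (fun x : ℝ => (1/2) * (x - b)^2) (x - b) x := by
    simpa using (((hasDerivAt_id x).sub_const b).pow 2).const_mul (1/2 : ℝ)
  refine monotoneOn_of_hasDerivWithinAt_nonneg (f' := fun x => g' x + (x - b)) (convex_Ici a)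
    (fun x hx => (hd x hx).continuousWithinAt.add (hsq x).continuousAt.continuousWithinAt)
    (fun x hx => ?_) (fun x hx => ?_)
  · rw [interior_Ici] at hx ⊢
    exact ((hd x (mem_Ici_of_Ioi hx)).mono Ioi_subset_Ici_self).add (hsq x).hasDerivWithinAt
  · rw [interior_Ici] at hx
    linarith [hslope x hx]

theorem le_deriv_add_of_line_le {c b : ℝ} {g' : ℝ → ℝ}
    (hline : ∀ x ∈ Ioo 0 c, c - x ≤ g' x) (hpos : ∀ x ∈ Ioi (0 : ℝ), 0 ≤ g' x) (hb : b ≤ c) :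
    ∀ x ∈ Ioi (0 : ℝ), b ≤ g' x + x := by
  intro x hx
  rcases lt_or_ge x c with hxc | hcx
  · linarith [hline x ⟨hx, hxc⟩]
  · linarith [hpos x hx]

theorem zero_is_min_below_threshold_general (g g' : ℝ → ℝ)
    (hmono : MonotoneOn g (Ici 0))
    (hderiv : ∀ x ∈ Ici (0:ℝ), HasDerivWithinAt g (g' x) (Ici 0) x)
    (hline : ∀ x ∈ Ioo (0:ℝ) (g' 0), g' 0 - x ≤ g' x)
    (b : ℝ) (hb : b ≤ g' 0) :
    IsMinOn (fun x => g x + (1/2) * (x - b)^2) (Ici 0) 0 := by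
  have hpos : ∀ x ∈ Ioi (0 : ℝ), 0 ≤ g' x := fun x hx =>
    (hderiv x hx.out.le).nonneg_of_monotoneOn (accPt_principal_Ici hx.out.le) hmono
  have hf := monotoneOn_add_half_sq_sub_Ici hderiv (le_deriv_add_of_line_le hline hpos hb)
  exact fun x hx => hf self_mem_Ici hx hx

/-- Hard thresholding: if `g'(0) - x ≤ g'(x)` on `(0, g'(0))`, then for every
`b ≤ g'(0)`, `0` globally minimizes `f_b(x) = g(x) + (x - b)²/2` on `[0,∞)`. -/
theorem zero_is_min_below_threshold (g g' : ℝ → ℝ)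
    (hg_nonneg : ∀ x ∈ Ici (0:ℝ), 0 ≤ g x) (hg0 : g 0 = 0)
    (hconc : ConcaveOn ℝ (Ici 0) g) (hmono : MonotoneOn g (Ici 0))
    (hderiv : ∀ x ∈ Ici (0:ℝ), HasDerivWithinAt g (g' x) (Ici 0) x)
    (hline : ∀ x ∈ Ioo (0:ℝ) (g' 0), g' 0 - x ≤ g' x)
    (b : ℝ) (hb0 : 0 ≤ b) (hb : b ≤ g' 0) :
    IsMinOn (fun x => g x + (1/2) * (x - b)^2) (Ici 0) 0 :=
  zero_is_min_below_threshold_general g g' hmono hderiv hline b hb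
end
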